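/- arXiv:2411.00811 — 11 statements merged into one kernel-verified Lean document; each statement's English description precedes it below -/
import Mathlib

section
/- The standard polynomial of degree 3 vanishes on S₁: for all Z₁, Z₂, Z₃ ∈ S₁, the alternating sum over all permutations σ ∈ S₃ of sign(σ)·Z_{σ(1)}·Z_{σ(2)}·Z_{σ(3)} equals the zero matrix. -/
open Matrix

variable {K : Type*} [Field K] [CharZero K]

/-- Elements of `S₀`: diag(0, 2a, -2a). -/
def Y0 (a : K) : Matrix (Fin 3) (Fin 3) K :=
  !![0, 0, 0; 0, 2*a, 0; 0, 0, -(2*a)]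

/-- Elements of `S₁`: rows (0, -m, n), (-2n, 0, 0), (2m, 0, 0). -/
def Z1 (m n : K) : Matrix (Fin 3) (Fin 3) K :=
  !![0, -m, n; -(2*n), 0, 0; 2*m, 0, 0]

/-- The standard polynomial of degree 3. -/
def s3 (A B C : Matrix (Fin 3) (Fin 3) K) : Matrix (Fin 3) (Fin 3) K :=
  A*B*C - A*C*B - B*A*C + B*C*A + C*A*B - C*B*A

/-!
The standard polynomial `s₃` is trilinear and alternating (it vanishes as soon as two of its
arguments coincide), so it vanishes on any three elements of a two-dimensional space such as `S₁`.
-/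

omit [CharZero K] in
theorem s3_smul_add_eq_zero (X Y : Matrix (Fin 3) (Fin 3) K) (a₁ b₁ a₂ b₂ a₃ b₃ : K) :
    s3 (a₁ • X + b₁ • Y) (a₂ • X + b₂ • Y) (a₃ • X + b₃ • Y) = 0 := by
  simp only [s3, add_mul, mul_add, smul_mul_assoc, mul_smul_comm]
  module

omit [CharZero K] in
theorem Z1_eq_smul_add (m n : K) : Z1 m n = m • Z1 1 0 + n • Z1 0 1 := by
  ext i j
  fin_cases i <;> fin_cases j <;> simp [Z1, mul_comm]

theorem stmt3 (m1 n1 m2 n2 m3 n3 : K) :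
    s3 (Z1 m1 n1) (Z1 m2 n2) (Z1 m3 n3) = 0 := by
  rw [Z1_eq_smul_add m1, Z1_eq_smul_add m2, Z1_eq_smul_add m3]
  exact s3_smul_add_eq_zero _ _ _ _ _ _ _ _
end

section
/- For all Y₁, Y₂ ∈ S₀ and Z₁, Z₂ ∈ S₁, we have Y₁·Z₁·Z₂·Y₂ = Y₂·Z₁·Z₂·Y₁. -/
open Matrix

variable {K : Type*} [Field K] [CharZero K]

/-! `S₀` is the line spanned by `diag(0, 2, -2)`, and sandwiching any matrix between two multiples
of one fixed matrix is symmetric in the two scalars; the shape of `S₁` plays no role. -/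

theorem Matrix.smul_mul_mul_smul_comm {n R : Type*} [Fintype n] [CommSemiring R]
    (a b : R) (D X : Matrix n n R) :
    a • D * X * (b • D) = b • D * X * (a • D) := by
  simp only [Matrix.smul_mul, Matrix.mul_smul, smul_smul, mul_comm a b]

theorem Y0_eq_smul_diagonal {F : Type*} [Field F] (a : F) : Y0 a = a • diagonal ![0, 2, -2] := by
  ext i j
  fin_cases i <;> fin_cases j <;> simp [Y0, mul_comm]

theorem stmt4 (a1 a2 m1 n1 m2 n2 : K) :
    Y0 a1 * Z1 m1 n1 * Z1 m2 n2 * Y0 a2 = Y0 a2 * Z1 m1 n1 * Z1 m2 n2 * Y0 a1 := by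
  simp only [Y0_eq_smul_diagonal, Matrix.mul_assoc _ (Z1 m1 n1)]
  exact smul_mul_mul_smul_comm a1 a2 _ _
end

section
/- For all Z₁, Z₂ ∈ S₁ and Y ∈ S₀, the matrix s₃(Z₁, Z₂, Y) commutes with every matrix in S₀ ∪ S₁ (equivalently, with every 3×3 matrix over K, i.e., it is a scalar matrix). -/
/-!
`S₀ ⊕ S₁` is closed under commutators, with `[Z₁(m,n), Z₁(p,q)] = Y₀(np - mq)` and
`[Y₀(a), Z₁(m,n)] = Z₁(-2am, 2an)`. Writing `s₃(A,B,C) = [A,B]C + [C,A]B - [C,B]A` turns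
`s₃(Z₁, Z₂, Y)` into a sum of three explicit products, which add up to the scalar matrix
`8a(m₂n₁ - m₁n₂)`; a scalar matrix commutes with everything.
-/

open Matrix

variable {K : Type*} [Field K] [CharZero K]

section

omit [CharZero K]

lemma s3_eq_commutators (A B C : Matrix (Fin 3) (Fin 3) K) :
    s3 A B C = (A * B - B * A) * C + (C * A - A * C) * B - (C * B - B * C) * A := by
  unfold s3
  noncomm_ring

lemma Z1_mul_sub_mul_Z1 (m n p q : K) :
    Z1 m n * Z1 p q - Z1 p q * Z1 m n = Y0 (n * p - m * q) := by
  ext i j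
  fin_cases i <;> fin_cases j <;> simp [Z1, Y0] <;> ring

lemma Y0_mul_sub_mul_Z1 (a m n : K) :
    Y0 a * Z1 m n - Z1 m n * Y0 a = Z1 (-(2 * a * m)) (2 * a * n) := by
  ext i j
  fin_cases i <;> fin_cases j <;> simp [Z1, Y0] <;> ring

lemma s3_Z1_Z1_Y0 (m₁ n₁ m₂ n₂ a : K) :
    s3 (Z1 m₁ n₁) (Z1 m₂ n₂) (Y0 a) = scalar (Fin 3) (8 * a * (m₂ * n₁ - m₁ * n₂)) := by
  rw [s3_eq_commutators, Z1_mul_sub_mul_Z1, Y0_mul_sub_mul_Z1, Y0_mul_sub_mul_Z1]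
  ext i j
  fin_cases i <;> fin_cases j <;> simp [Z1, Y0] <;> ring

end

theorem stmt6 (m1 n1 m2 n2 a : K) :
    ∀ X : Matrix (Fin 3) (Fin 3) K,
      ((∃ b : K, X = Y0 b) ∨ (∃ p q : K, X = Z1 p q)) →
      s3 (Z1 m1 n1) (Z1 m2 n2) (Y0 a) * X = X * s3 (Z1 m1 n1) (Z1 m2 n2) (Y0 a) := by
  intro X _
  rw [s3_Z1_Z1_Y0]
  exact scalar_commute _ (Commute.all _) X
end

section
/- For all Y ∈ S₀ and Z₁, Z₂, Z₃ ∈ S₁, we have Y·[Z₁, Z₂]·Z₃ + Z₃·Z₁·Y·Z₂ = 0, where [A, B] = AB − BA. -/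
/-!
The bracket of two elements of `S₁` lies in `S₀`: `[Z(m,n), Z(m',n')] = Y(nm' - n'm)`.
Both summands are then matrices supported on the first column, and a direct computation shows
`Z₃ Z₁ Y Z₂ = -Y [Z₁, Z₂] Z₃`.
-/

open Matrix

variable {K : Type*} [Field K] [CharZero K]

theorem Z1_mul_Z1_sub_Z1_mul_Z1 {F : Type*} [Field F] (m n m' n' : F) :
    Z1 m n * Z1 m' n' - Z1 m' n' * Z1 m n = Y0 (n * m' - n' * m) := by
  ext i j
  fin_cases i <;> fin_cases j <;> simp [Y0, Z1] <;> ring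

theorem Z1_mul_Z1_mul_Y0_mul_Z1 {F : Type*} [Field F] (a m n m' n' m'' n'' : F) :
    Z1 m n * Z1 m' n' * Y0 a * Z1 m'' n'' =
      -(Y0 a * Y0 (n' * m'' - n'' * m') * Z1 m n) := by
  ext i j
  fin_cases i <;> fin_cases j <;> simp [Y0, Z1, Matrix.mul_apply, Fin.sum_univ_three] <;> ring

theorem stmt7 (a m1 n1 m2 n2 m3 n3 : K) :
    Y0 a * (Z1 m1 n1 * Z1 m2 n2 - Z1 m2 n2 * Z1 m1 n1) * Z1 m3 n3
      + Z1 m3 n3 * Z1 m1 n1 * Y0 a * Z1 m2 n2 = 0 := by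
  rw [Z1_mul_Z1_sub_Z1_mul_Z1, Z1_mul_Z1_mul_Y0_mul_Z1, add_neg_cancel]
end

section
/- For all Z₁, Z₂, Z₃ ∈ S₁ and Y ∈ S₀, we have Z₁·Y·Z₂·Z₃ = Z₃·[Z₂, Z₁]·Y, where [A, B] = AB − BA. -/
/-!
The commutator of two elements of `S₁` lies in `S₀`: `[Z(m₂, n₂), Z(m₁, n₁)] = Y(m₁n₂ - m₂n₁)`.
Multiplying an element of `S₁` on the right by one of `S₀` kills its last two rows, so both sides
reduce to the same first-row matrix `4a(m₁n₂ - m₂n₁) · (0, -m₃, n₃)`.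
-/

open Matrix

variable {K : Type*} [Field K] [CharZero K]

section

omit [CharZero K]

def topRow (u v : K) : Matrix (Fin 3) (Fin 3) K :=
  !![0, u, v; 0, 0, 0; 0, 0, 0]

theorem Z1_commutator (m₁ n₁ m₂ n₂ : K) :
    Z1 m₂ n₂ * Z1 m₁ n₁ - Z1 m₁ n₁ * Z1 m₂ n₂ = Y0 (m₁ * n₂ - m₂ * n₁) := by
  simp only [Z1, Y0, mul_fin_three, of_sub_of, cons_sub_cons, empty_sub_empty]
  ring_nf

theorem Z1_mul_Y0 (m n a : K) : Z1 m n * Y0 a = topRow (-(2 * a * m)) (-(2 * a * n)) := by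
  simp only [topRow, Z1, Y0, mul_fin_three]
  ring_nf

theorem topRow_mul_Y0 (u v a : K) : topRow u v * Y0 a = topRow (2 * a * u) (-(2 * a * v)) := by
  simp only [topRow, Y0, mul_fin_three]
  ring_nf

theorem topRow_mul_Z1_mul_Z1 (u v m n m' n' : K) :
    topRow u v * Z1 m n * Z1 m' n' =
      topRow (-(2 * (m * v - n * u) * m')) (2 * (m * v - n * u) * n') := by
  simp only [topRow, Z1, mul_fin_three]
  ring_nf

end

theorem stmt8 (m1 n1 m2 n2 m3 n3 a : K) :
    Z1 m1 n1 * Y0 a * Z1 m2 n2 * Z1 m3 n3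
      = Z1 m3 n3 * (Z1 m2 n2 * Z1 m1 n1 - Z1 m1 n1 * Z1 m2 n2) * Y0 a := by
  rw [Z1_commutator, Z1_mul_Y0, topRow_mul_Z1_mul_Z1, Z1_mul_Y0, topRow_mul_Y0]
  congr 1 <;> ring
end

section
/- For all Y ∈ S₀ and Z₁, Z₂, Z₃ ∈ S₁, we have Y·Z₁·Z₂·Z₃ = [[Y, Z₂], Z₃]·Z₁, where [A, B] = AB − BA. -/
/-!
`ad (Y0 a)` maps `S₁` to itself and the commutator of two elements of `S₁` lies in `S₀`, so
`[[Y, Z₂], Z₃] = Y0 (2 a s)` with `s = m₂ n₃ + n₂ m₃`. On the other side, `Y * Z₁` is supported on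
the first column while the first row of `Z₂ * Z₃` is `(2 s, 0, 0)`, so `Y * Z₁ * (Z₂ * Z₃)` is
`2 s • (Y * Z₁)` as well.
-/

open Matrix

variable {K : Type*} [Field K] [CharZero K]

/-- Commutator of matrices. -/
def lb (A B : Matrix (Fin 3) (Fin 3) K) : Matrix (Fin 3) (Fin 3) K := A*B - B*A

omit [CharZero K] in
theorem Y0_mul (c a : K) : Y0 (c * a) = c • Y0 a := by
  ext i j
  fin_cases i <;> fin_cases j <;> simp [Y0] <;> ring

omit [CharZero K] in
theorem lb_Y0_Z1 (a m n : K) : lb (Y0 a) (Z1 m n) = Z1 (-(2 * a * m)) (2 * a * n) := by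
  ext i j
  fin_cases i <;> fin_cases j <;> simp [Y0, Z1, lb] <;> ring

omit [CharZero K] in
theorem lb_Z1_Z1 (p q m n : K) : lb (Z1 p q) (Z1 m n) = Y0 (q * m - p * n) := by
  ext i j
  fin_cases i <;> fin_cases j <;> simp [Y0, Z1, lb] <;> ring

omit [CharZero K] in
theorem Y0_mul_Z1_mul_Z1_mul_Z1 (a m n p q r t : K) :
    Y0 a * Z1 m n * (Z1 p q * Z1 r t) = (2 * (p * t + q * r)) • (Y0 a * Z1 m n) := by
  ext i j
  fin_cases i <;> fin_cases j <;> simp [Y0, Z1, mul_apply, Fin.sum_univ_three] <;> ring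

theorem stmt9 (a m1 n1 m2 n2 m3 n3 : K) :
    Y0 a * Z1 m1 n1 * Z1 m2 n2 * Z1 m3 n3
      = lb (lb (Y0 a) (Z1 m2 n2)) (Z1 m3 n3) * Z1 m1 n1 := by
  have hcoeff : 2 * a * n2 * m3 - -(2 * a * m2) * n3 = 2 * (m2 * n3 + n2 * m3) * a := by ring
  rw [lb_Y0_Z1, lb_Z1_Z1, hcoeff, Y0_mul, smul_mul_assoc, mul_assoc (Y0 a * Z1 m1 n1),
    Y0_mul_Z1_mul_Z1_mul_Z1]
end

section
/- For all Z₁, Z₂, Z₃ ∈ S₁ and Y ∈ S₀, we have Z₁·Z₂·Z₃·Y = Z₃·[[Y, Z₁], Z₂], where [A, B] = AB − BA. -/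
open Matrix

variable {K : Type*} [Field K] [CharZero K]

omit [CharZero K] in
theorem Z1_mul_Z1 (p q m n : K) :
    Z1 p q * Z1 m n =
      !![2 * (p * n + q * m), 0, 0; 0, 2 * q * m, -(2 * q * n); 0, -(2 * p * m), 2 * p * n] := by
  ext i j
  fin_cases i <;> fin_cases j <;> simp [Z1, mul_apply, Fin.sum_univ_three]; ring

omit [CharZero K] in
theorem Z1_mul_Z1_mul_Z1_mul_Y0 (m₁ n₁ m₂ n₂ m₃ n₃ a : K) :
    Z1 m₁ n₁ * Z1 m₂ n₂ * Z1 m₃ n₃ * Y0 a = Z1 m₃ n₃ * Y0 (2 * a * (n₁ * m₂ + m₁ * n₂)) := by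
  rw [Z1_mul_Z1]
  ext i j
  fin_cases i <;> fin_cases j <;> simp [Z1, Y0, mul_apply, Fin.sum_univ_three] <;> ring

theorem stmt10 (m1 n1 m2 n2 m3 n3 a : K) :
    Z1 m1 n1 * Z1 m2 n2 * Z1 m3 n3 * Y0 a
      = Z1 m3 n3 * lb (lb (Y0 a) (Z1 m1 n1)) (Z1 m2 n2) := by
  rw [lb_Y0_Z1, lb_Z1_Z1, Z1_mul_Z1_mul_Z1_mul_Y0]
  congr 2
  ring
end

section
/- For any k ≥ 0, for all Y₁, Y₂ ∈ S₀ and Z₁, ..., Z_{2k+1} ∈ S₁, the product Y₁·Z₁·...·Z_{2k+1}·Y₂ is the zero matrix. -/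
open Matrix

variable {K : Type*} [Field K] [CharZero K]

/-!
Grade the basis of `K³` by `ZMod 2`, the first vector odd and the other two even. Every element
of `S₁` swaps parities, so a product of an odd number of them is odd: its entries vanish on
the blocks `{0} × {0}` and `{1, 2} × {1, 2}`. An element of `S₀` is diagonal with first entry
zero, so sandwiching between two of them only sees the block `{1, 2} × {1, 2}`, which is zero.
-/

namespace Matrix

variable {n R G : Type*}

/-- `M` maps the part of degree `g` to the part of degree `d + g`. -/
def IsHomogeneous [Zero R] [Add G] (deg : n → G) (d : G) (M : Matrix n n R) : Prop :=
  ∀ i j, deg i ≠ d + deg j → M i j = 0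

theorem IsHomogeneous.mul [Fintype n] [NonUnitalNonAssocSemiring R] [AddSemigroup G]
    {deg : n → G} {d e : G} {M N : Matrix n n R}
    (hM : IsHomogeneous deg d M) (hN : IsHomogeneous deg e N) :
    IsHomogeneous deg (d + e) (M * N) := by
  intro i j hij
  refine Finset.sum_eq_zero fun k _ => ?_
  by_cases hik : deg i = d + deg k
  · have hkj : deg k ≠ e + deg j := fun hkj => hij (by rw [hik, hkj, add_assoc])
    simp [hN k j hkj]
  · simp [hM i k hik]

theorem isHomogeneous_one [DecidableEq n] [NonAssocSemiring R] [AddZeroClass G] (deg : n → G) :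
    IsHomogeneous deg 0 (1 : Matrix n n R) := by
  intro i j hij
  exact one_apply_ne fun h => hij (by rw [h, zero_add])

theorem isHomogeneous_list_prod [Fintype n] [DecidableEq n] [Semiring R] [AddMonoid G]
    {deg : n → G} {d : G} {l : List (Matrix n n R)} (hl : ∀ M ∈ l, IsHomogeneous deg d M) :
    IsHomogeneous deg (l.length • d) l.prod := by
  induction l with
  | nil => simpa using isHomogeneous_one deg
  | cons M l ih =>
    rw [List.prod_cons, List.length_cons, succ_nsmul']
    exact (hl M List.mem_cons_self).mul (ih fun N hN => hl N (List.mem_cons_of_mem M hN))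

end Matrix

def parityFin3 (i : Fin 3) : ZMod 2 := if i = 0 then 1 else 0

theorem isHomogeneous_Z1 {F : Type*} [Field F] (m n : F) :
    IsHomogeneous parityFin3 1 (Z1 m n) := by
  intro i j hij
  fin_cases i <;> fin_cases j <;> first | exact absurd (by decide) hij | simp [Z1]

theorem Y0_mul_mul_Y0_eq_zero {F : Type*} [Field F] (a₁ a₂ : F)
    {M : Matrix (Fin 3) (Fin 3) F} (hM : IsHomogeneous parityFin3 1 M) :
    Y0 a₁ * M * Y0 a₂ = 0 := by
  have hY (a : F) : Y0 a = diagonal ![0, 2 * a, -(2 * a)] := by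
    ext i j; fin_cases i <;> fin_cases j <;> rfl
  rw [hY, hY]
  ext i j
  rw [mul_diagonal, diagonal_mul, Matrix.zero_apply]
  by_cases hi : i = 0
  · simp [hi]
  by_cases hj : j = 0
  · simp [hj]
  simp [hM i j (by simp [parityFin3, hi, hj])]

theorem stmt13 (k : ℕ) (a1 a2 : K) (m n : Fin (2*k+1) → K) :
    Y0 a1 * (List.ofFn fun i => Z1 (m i) (n i)).prod * Y0 a2 = 0 := by
  apply Y0_mul_mul_Y0_eq_zero
  have hodd := isHomogeneous_list_prod (d := (1 : ZMod 2))
    (l := List.ofFn fun i => Z1 (m i) (n i))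
    (List.forall_mem_ofFn_iff.mpr fun i => isHomogeneous_Z1 (m i) (n i))
  rwa [List.length_ofFn, nsmul_one, Nat.cast_succ, Nat.cast_mul, ZMod.natCast_self, zero_mul,
    zero_add] at hodd
end

section
/- For any k ≥ 0, for all Z₁, Z₂ ∈ S₁ and Y₁, ..., Y_{2k+1} ∈ S₀, we have Z₁·Y₁·...·Y_{2k+1}·Z₂ + Z₂·Y₁·...·Y_{2k+1}·Z₁ = 0. -/
open Matrix

variable {K : Type*} [Field K] [CharZero K]

/-!
The elements of `S₀` are the matrices `diag(0, c, -c)`, and a product of an odd number of them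
is again of this form: the last entry picks up an odd number of sign changes. For every such `D`
the `(0,0)` entry of `Z₁ D Z₂ + Z₂ D Z₁` is a multiple of `c + (-c)`, and all its other entries
are multiples of the first diagonal entry `0` of `D`.
-/

theorem Matrix.list_prod_ofFn_diagonal {ι R : Type*} [Fintype ι] [DecidableEq ι] [CommRing R]
    {n : ℕ} (d : Fin n → ι → R) :
    (List.ofFn fun i => diagonal (d i)).prod = diagonal fun j => ∏ i, d i j := by
  have h := map_list_prod (diagonalRingHom ι R) (List.ofFn d)
  rw [List.map_ofFn, List.prod_ofFn] at h
  rw [← funext fun j => Finset.prod_apply j Finset.univ d]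
  exact h.symm

theorem list_prod_ofFn_diagonal_zero_neg_of_odd {R : Type*} [CommRing R] {n : ℕ} (hn : Odd n)
    (c : Fin n → R) :
    (List.ofFn fun i => diagonal ![0, c i, -c i]).prod = diagonal ![0, ∏ i, c i, -∏ i, c i] := by
  rw [list_prod_ofFn_diagonal]
  congr 1
  funext j
  fin_cases j
  · simp [hn.pos.ne']
  · rfl
  · simp [Finset.prod_neg, hn.neg_one_pow]

theorem Y0_eq_diagonal {F : Type*} [Field F] (a : F) : Y0 a = diagonal ![0, 2 * a, -(2 * a)] :=
  (diagonal_vec3 _ _ _).symm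

theorem Z1_mul_diagonal_mul_Z1_add_swap {F : Type*} [Field F] (c m n m' n' : F) :
    Z1 m n * diagonal ![0, c, -c] * Z1 m' n' + Z1 m' n' * diagonal ![0, c, -c] * Z1 m n = 0 := by
  simp only [Z1, diagonal_vec3, mul_fin_three]
  ext i j
  fin_cases i <;> fin_cases j <;> simp; ring

theorem stmt14 (k : ℕ) (m1 n1 m2 n2 : K) (a : Fin (2*k+1) → K) :
    Z1 m1 n1 * (List.ofFn fun i => Y0 (a i)).prod * Z1 m2 n2
      + Z1 m2 n2 * (List.ofFn fun i => Y0 (a i)).prod * Z1 m1 n1 = 0 := by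
  simp only [Y0_eq_diagonal]
  rw [list_prod_ofFn_diagonal_zero_neg_of_odd (odd_two_mul_add_one k)]
  exact Z1_mul_diagonal_mul_Z1_add_swap _ _ _ _ _
end

section
/- For any k ≥ 1, for all Y₁, Y₂ ∈ S₀ and Z₁, ..., Z_{2k} ∈ S₁, we have Y₁·Z₁·...·Z_{2k}·Y₂ = Y₂·Z₁·...·Z_{2k}·Y₁. -/
open Matrix

variable {K : Type*} [Field K] [CharZero K]

theorem smul_mul_mul_smul_swap {R A : Type*} [CommMonoid R] [Mul A] [MulAction R A]
    [IsScalarTower R A A] [SMulCommClass R A A] (a b : R) (x y : A) :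
    a • x * y * (b • x) = b • x * y * (a • x) := by
  simp only [smul_mul_assoc, mul_smul_comm, smul_smul, mul_comm a b]

omit [CharZero K] in
theorem Y0_eq_smul (a : K) : Y0 a = a • Y0 1 := by
  ext i j
  fin_cases i <;> fin_cases j <;> simp [Y0, mul_comm]

theorem stmt15_general (k : ℕ) (a1 a2 : K) (m n : Fin (2*k) → K) :
    Y0 a1 * (List.ofFn fun i => Z1 (m i) (n i)).prod * Y0 a2
      = Y0 a2 * (List.ofFn fun i => Z1 (m i) (n i)).prod * Y0 a1 := by
  rw [Y0_eq_smul a1, Y0_eq_smul a2]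
  exact smul_mul_mul_smul_swap a1 a2 _ _

theorem stmt15 (k : ℕ) (hk : 1 ≤ k) (a1 a2 : K) (m n : Fin (2*k) → K) :
    Y0 a1 * (List.ofFn fun i => Z1 (m i) (n i)).prod * Y0 a2
      = Y0 a2 * (List.ofFn fun i => Z1 (m i) (n i)).prod * Y0 a1 :=
  stmt15_general k a1 a2 m n
end

section
/- The subalgebra of 3×3 matrices over K generated (as an associative algebra) by the set S of matrices with first row (0, -n, m), second row (-2m, 2a, 0), third row (2n, 0, -2a) for a, m, n ∈ K, is all of M₃(K). -/
/-!
In the basis `{h, x, y}`, `ad h = diag(0, 2, -2)` has distinct eigenvalues, so the three diagonal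
matrix units are polynomials in it (this is where `2 ≠ 0` enters). Compressing `ad x` and `ad y`
between diagonal units isolates four off-diagonal matrix units, and products of those give the
remaining two; the matrix units span `M₃(K)`.
-/

open Matrix

namespace Matrix

variable {n R : Type*} [Fintype n] [DecidableEq n]

theorem subalgebra_eq_top_of_forall_single_one_mem [CommSemiring R]
    {S : Subalgebra R (Matrix n n R)} (h : ∀ i j, single i j (1 : R) ∈ S) : S = ⊤ := by
  refine eq_top_iff.2 fun M _ => ?_
  rw [matrix_eq_sum_single M]
  refine S.sum_mem fun i _ => S.sum_mem fun j _ => ?_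
  simpa using S.smul_mem (h i j) (M i j)

theorem single_one_mem_of_mul [CommSemiring R] {S : Subalgebra R (Matrix n n R)} {i j k : n}
    (hij : single i j (1 : R) ∈ S) (hjk : single j k (1 : R) ∈ S) : single i k (1 : R) ∈ S := by
  simpa using S.mul_mem hij hjk

theorem single_one_mem_of_apply_ne_zero {K : Type*} [Field K] {S : Subalgebra K (Matrix n n K)}
    {X : Matrix n n K} {i j : n} (hX : X ∈ S) (hXij : X i j ≠ 0)
    (hi : single i i (1 : K) ∈ S) (hj : single j j (1 : K) ∈ S) : single i j (1 : K) ∈ S := by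
  simpa [hXij] using S.smul_mem (S.mul_mem (S.mul_mem hi hX) hj) (X i j)⁻¹

end Matrix

def adSl2 (K : Type*) [CommRing K] : Set (Matrix (Fin 3) (Fin 3) K) :=
  {A | ∃ a m n : K, A = !![0, -n, m; -(2*m), 2*a, 0; 2*n, 0, -(2*a)]}

theorem mem_adSl2 {K : Type*} [CommRing K] (a m n : K) :
    !![0, -n, m; -(2*m), 2*a, 0; 2*n, 0, -(2*a)] ∈ adSl2 K :=
  ⟨a, m, n, rfl⟩

theorem single_diag_mem_adjoin_adSl2 {K : Type*} [Field K] [CharZero K] (i : Fin 3) :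
    single i i (1 : K) ∈ Algebra.adjoin K (adSl2 K) := by
  set T := Algebra.adjoin K (adSl2 K)
  have hH := Algebra.subset_adjoin (R := K) (mem_adSl2 (1 : K) 0 0)
  have h1 : single 1 1 (1 : K) ∈ T := by
    convert T.smul_mem (T.add_mem (T.mul_mem hH hH) (T.smul_mem hH (2 : K))) (1 / 8 : K) using 1
    ext i j
    fin_cases i <;> fin_cases j <;>
      norm_num [single_apply, Fin.ext_iff, mul_apply, Fin.sum_univ_three]
  have h2 : single 2 2 (1 : K) ∈ T := by
    convert T.smul_mem (T.sub_mem (T.mul_mem hH hH) (T.smul_mem hH (2 : K))) (1 / 8 : K) using 1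
    ext i j
    fin_cases i <;> fin_cases j <;>
      norm_num [single_apply, Fin.ext_iff, mul_apply, Fin.sum_univ_three]
  have h0 : single 0 0 (1 : K) ∈ T := by
    convert T.sub_mem (T.sub_mem T.one_mem h1) h2 using 1
    ext i j
    fin_cases i <;> fin_cases j <;> norm_num [single_apply, Fin.ext_iff, one_apply]
  fin_cases i <;> assumption

theorem stmt19 {K : Type*} [Field K] [CharZero K] :
    Algebra.adjoin K
      {A : Matrix (Fin 3) (Fin 3) K |
        ∃ a m n : K, A = !![0, -n, m; -(2*m), 2*a, 0; 2*n, 0, -(2*a)]} = ⊤ := by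
  change Algebra.adjoin K (adSl2 K) = ⊤
  have hx := Algebra.subset_adjoin (R := K) (mem_adSl2 (0 : K) 1 0)
  have hy := Algebra.subset_adjoin (R := K) (mem_adSl2 (0 : K) 0 1)
  have hd := single_diag_mem_adjoin_adSl2 (K := K)
  have h02 := single_one_mem_of_apply_ne_zero hx (by simp) (hd 0) (hd 2)
  have h10 := single_one_mem_of_apply_ne_zero hx (by simp) (hd 1) (hd 0)
  have h01 := single_one_mem_of_apply_ne_zero hy (by simp) (hd 0) (hd 1)
  have h20 := single_one_mem_of_apply_ne_zero hy (by simp) (hd 2) (hd 0)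
  have h12 := single_one_mem_of_mul h10 h02
  have h21 := single_one_mem_of_mul h20 h01
  refine subalgebra_eq_top_of_forall_single_one_mem fun i j => ?_
  fin_cases i <;> fin_cases j <;> first | exact hd _ | assumption
end
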